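/- Let t > 0 and let f : ℝ → ℝ be six times continuously differentiable with bounded sixth derivative. Set b_1(t) = (t²/2) f''(t) and b_2(t) = (t⁴/8) f⁽⁴⁾(t) + (t³/3) f⁽³⁾(t). Then lim_{n→∞} n³ · ( ∫ f(x) dΓ(n, n/t)(x) − f(t) − b_1(t)/n − b_2(t)/n² ) = (t⁶/48) f⁽⁶⁾(t) + (t⁵/6) f⁽⁵⁾(t) + (t⁴/4) f⁽⁴⁾(t). -/

import Mathlib

/-!
Write `f = P + R` with `P` the Taylor polynomial of order six of `f` at `t`. The moments
`∫ x ^ k dΓ(a, r) = a (a + 1) ⋯ (a + k - 1) / r ^ k` make `∫ P dΓ(n, n/t)` an explicit polynomial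
in `1/n`, whose expansion produces `b₁`, `b₂` and the limit. Since `f⁽⁶⁾` is bounded and continuous
at `t`, for every `ε > 0` there is `C` with `|R x| ≤ ε (x - t)⁶ + C (x - t)⁸`; as
`n³ ∫ (x - t)⁶ dΓ(n, n/t) → 15 t⁶` and `n³ ∫ (x - t)⁸ dΓ(n, n/t) → 0`, the remainder contributes
nothing in the limit.
-/

open MeasureTheory ProbabilityTheory Filter Real Set Topology

lemma Real.Gamma_add_nat_eq_ascPochhammer_mul {a : ℝ} (ha : 0 < a) (k : ℕ) :
    Gamma (a + k) = (ascPochhammer ℝ k).eval a * Gamma a := by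
  induction k with
  | zero => simp
  | succ k ih =>
    rw [Nat.cast_succ, ← add_assoc, Gamma_add_one (by positivity), ih, ascPochhammer_succ_right]
    simp only [Polynomial.eval_mul, Polynomial.eval_add, Polynomial.eval_X,
      Polynomial.eval_natCast]
    ring

namespace ProbabilityTheory

variable {a r : ℝ}

lemma pow_mul_gammaPDFReal (ha : 0 < a) (hr : 0 < r) (k : ℕ) {x : ℝ} (hx : 0 < x) :
    x ^ k * gammaPDFReal a r x
      = (ascPochhammer ℝ k).eval a / r ^ k * gammaPDFReal (a + k) r x := by
  have hΓ := (Gamma_pos_of_pos ha).ne'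
  have hpoch := (ascPochhammer_pos k a ha).ne'
  rw [gammaPDFReal, gammaPDFReal, if_pos hx.le, if_pos hx.le,
    show a + k - 1 = (a - 1) + k by ring, rpow_add hx, rpow_add hr,
    rpow_natCast, rpow_natCast, Gamma_add_nat_eq_ascPochhammer_mul ha]
  field_simp

lemma gammaMeasure_ae_pos : ∀ᵐ x ∂(gammaMeasure a r), 0 < x := by
  rw [ae_iff, show {x : ℝ | ¬0 < x} = Iic 0 by ext; simp, gammaMeasure,
    withDensity_apply _ measurableSet_Iic, setLIntegral_congr Iio_ae_eq_Iic.symm,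
    lintegral_gammaPDF_of_nonpos le_rfl]

lemma lintegral_pow_gammaMeasure (ha : 0 < a) (hr : 0 < r) (k : ℕ) :
    ∫⁻ x, ENNReal.ofReal (x ^ k) ∂(gammaMeasure a r)
      = ENNReal.ofReal ((ascPochhammer ℝ k).eval a / r ^ k) := by
  have hpdf (b : ℝ) : Measurable (gammaPDF b r) := (measurable_gammaPDFReal b r).ennreal_ofReal
  rw [gammaMeasure, lintegral_withDensity_eq_lintegral_mul _ (hpdf a) (by fun_prop)]
  have hae : (gammaPDF a r * fun x ↦ ENNReal.ofReal (x ^ k))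
      =ᵐ[volume] fun x ↦ ENNReal.ofReal ((ascPochhammer ℝ k).eval a / r ^ k)
        * gammaPDF (a + k) r x := by
    filter_upwards [measure_singleton (μ := volume) (0 : ℝ) |> compl_mem_ae_iff.mpr]
      with x (hx : x ≠ 0)
    rcases hx.lt_or_gt with hneg | hpos
    · simp [gammaPDF_of_neg hneg]
    · rw [Pi.mul_apply, gammaPDF, gammaPDF, ← ENNReal.ofReal_mul (gammaPDFReal_nonneg ha hr x),
        ← ENNReal.ofReal_mul (by positivity [ascPochhammer_pos k a ha]), mul_comm,
        pow_mul_gammaPDFReal ha hr k hpos]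
  rw [lintegral_congr_ae hae, lintegral_const_mul _ (hpdf _),
    lintegral_gammaPDF_eq_one (by positivity) hr, mul_one]

lemma integrable_pow_gammaMeasure (ha : 0 < a) (hr : 0 < r) (k : ℕ) :
    Integrable (fun x : ℝ ↦ x ^ k) (gammaMeasure a r) := by
  refine ⟨by fun_prop, ?_⟩
  rw [hasFiniteIntegral_iff_norm]
  refine (lintegral_congr_ae ?_).trans_lt
    ((lintegral_pow_gammaMeasure ha hr k).trans_lt ENNReal.ofReal_lt_top)
  filter_upwards [gammaMeasure_ae_pos] with x hx
  rw [Real.norm_of_nonneg (by positivity)]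

lemma integral_pow_gammaMeasure (ha : 0 < a) (hr : 0 < r) (k : ℕ) :
    ∫ x, x ^ k ∂(gammaMeasure a r) = (ascPochhammer ℝ k).eval a / r ^ k := by
  rw [integral_eq_lintegral_of_nonneg_ae (gammaMeasure_ae_pos.mono fun x hx ↦ by positivity)
    (by fun_prop), lintegral_pow_gammaMeasure ha hr k,
    ENNReal.toReal_ofReal (by positivity [ascPochhammer_pos k a ha])]

lemma integrable_sub_pow_gammaMeasure (ha : 0 < a) (hr : 0 < r) (t : ℝ) (k : ℕ) :
    Integrable (fun x : ℝ ↦ (x - t) ^ k) (gammaMeasure a r) := by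
  simp_rw [sub_eq_add_neg, add_pow]
  exact integrable_finsetSum _ fun j _ ↦
    ((integrable_pow_gammaMeasure ha hr j).mul_const _).mul_const _

lemma integral_sub_pow_gammaMeasure (ha : 0 < a) (hr : 0 < r) (t : ℝ) (k : ℕ) :
    ∫ x, (x - t) ^ k ∂(gammaMeasure a r) = ∑ j ∈ Finset.range (k + 1),
      (ascPochhammer ℝ j).eval a / r ^ j * (-t) ^ (k - j) * k.choose j := by
  simp_rw [sub_eq_add_neg, add_pow]
  rw [integral_finsetSum _ fun j _ ↦
    ((integrable_pow_gammaMeasure ha hr j).mul_const _).mul_const _]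
  simp only [integral_mul_const, integral_pow_gammaMeasure ha hr]

end ProbabilityTheory

lemma abs_le_mul_abs_sub_pow_of_iteratedDeriv_eq_zero {h : ℝ → ℝ} {t x C : ℝ} {m : ℕ}
    (hh : ContDiff ℝ m h) (h0 : ∀ k < m, iteratedDeriv k h t = 0)
    (hC : ∀ y, |y - t| ≤ |x - t| → |iteratedDeriv m h y| ≤ C) :
    |h x| ≤ C * |x - t| ^ m := by
  induction m generalizing h x with
  | zero => simpa using hC x le_rfl
  | succ m ih =>
    have hC0 : 0 ≤ C := (abs_nonneg _).trans (hC t (by simp))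
    rw [Nat.cast_succ, contDiff_succ_iff_deriv] at hh
    have hderiv : ∀ y ∈ Metric.closedBall t |x - t|, ‖deriv h y‖ ≤ C * |x - t| ^ m := by
      intro y hy
      rw [Metric.mem_closedBall, Real.dist_eq] at hy
      calc |deriv h y| ≤ C * |y - t| ^ m :=
            ih hh.2.2 (fun k hk ↦ by rw [← iteratedDeriv_succ']; exact h0 _ (by omega))
              fun z hz ↦ by rw [← iteratedDeriv_succ']; exact hC z (hz.trans hy)
        _ ≤ C * |x - t| ^ m := by gcongr
    have := (convex_closedBall t |x - t|).norm_image_sub_le_of_norm_deriv_le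
      (fun y _ ↦ hh.1 y) hderiv (Metric.mem_closedBall_self (abs_nonneg _))
      (by rw [Metric.mem_closedBall, Real.dist_eq])
    rw [show h t = 0 by simpa using h0 0 (by omega), sub_zero, Real.norm_eq_abs] at this
    rwa [pow_succ, ← mul_assoc]

noncomputable def taylorPoly (f : ℝ → ℝ) (t : ℝ) (m : ℕ) (x : ℝ) : ℝ :=
  ∑ k ∈ Finset.range (m + 1), iteratedDeriv k f t / k.factorial * (x - t) ^ k

section Taylor

variable {f : ℝ → ℝ} {t : ℝ} {m : ℕ}

lemma contDiff_taylorPoly {n : WithTop ℕ∞} : ContDiff ℝ n (taylorPoly f t m) :=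
  ContDiff.sum fun _ _ ↦ contDiff_const.mul ((contDiff_id.sub contDiff_const).pow _)

lemma iteratedDeriv_taylorPoly (j : ℕ) :
    iteratedDeriv j (taylorPoly f t m) = fun x ↦ ∑ k ∈ Finset.range (m + 1),
      iteratedDeriv k f t / k.factorial * (k.descFactorial j * (x - t) ^ (k - j)) := by
  induction j with
  | zero => ext; simp [taylorPoly]
  | succ j ih =>
    ext x
    have hd (k : ℕ) : HasDerivAt (fun x ↦ iteratedDeriv k f t / k.factorial *
        (k.descFactorial j * (x - t) ^ (k - j))) (iteratedDeriv k f t / k.factorial *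
        (k.descFactorial j * ((k - j : ℕ) * (x - t) ^ (k - j - 1)))) x := by
      simpa using ((((hasDerivAt_id x).sub_const t).pow (k - j)).const_mul
        (k.descFactorial j : ℝ)).const_mul (iteratedDeriv k f t / k.factorial)
    rw [iteratedDeriv_succ, ih, deriv_fun_sum fun k _ ↦ (hd k).differentiableAt]
    refine Finset.sum_congr rfl fun k _ ↦ ?_
    rw [(hd k).deriv, Nat.descFactorial_succ, Nat.sub_sub]
    push_cast
    ring

lemma iteratedDeriv_taylorPoly_self {j : ℕ} (hj : j ≤ m) :
    iteratedDeriv j (taylorPoly f t m) t = iteratedDeriv j f t := by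
  rw [iteratedDeriv_taylorPoly]
  dsimp only
  rw [Finset.sum_eq_single j]
  · simp [Nat.descFactorial_self, (Nat.factorial_pos j).ne']
  · intro k _ hkj
    rcases hkj.lt_or_gt with hlt | hgt
    · simp [Nat.descFactorial_eq_zero_iff_lt.mpr hlt]
    · simp [Nat.sub_ne_zero_of_lt hgt]
  · simp; omega

lemma iteratedDeriv_taylorPoly_top (x : ℝ) :
    iteratedDeriv m (taylorPoly f t m) x = iteratedDeriv m f t := by
  rw [iteratedDeriv_taylorPoly]
  dsimp only
  rw [Finset.sum_eq_single m]
  · simp [Nat.descFactorial_self, (Nat.factorial_pos m).ne']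
  · intro k hk hkm
    have hlt : k < m := by simp at hk; omega
    simp [Nat.descFactorial_eq_zero_iff_lt.mpr hlt]
  · simp

end Taylor

lemma abs_sub_taylorPoly_le {f : ℝ → ℝ} {m : ℕ} {M : ℝ} (hf : ContDiff ℝ m f)
    (hM : ∀ x, |iteratedDeriv m f x| ≤ M) (t : ℝ) {ε : ℝ} (hε : 0 < ε) :
    ∃ C, ∀ x, |f x - taylorPoly f t m x| ≤ ε * |x - t| ^ m + C * |x - t| ^ (m + 2) := by
  set G := fun x ↦ f x - taylorPoly f t m x
  have hG : ContDiff ℝ m G := hf.sub contDiff_taylorPoly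
  have hG0 : ∀ k < m, iteratedDeriv k G t = 0 := fun k hk ↦ by
    rw [iteratedDeriv_fun_sub (hf.of_le (by exact_mod_cast hk.le)).contDiffAt
      contDiff_taylorPoly.contDiffAt, iteratedDeriv_taylorPoly_self hk.le, sub_self]
  have hGm (y : ℝ) : iteratedDeriv m G y = iteratedDeriv m f y - iteratedDeriv m f t := by
    rw [iteratedDeriv_fun_sub hf.contDiffAt contDiff_taylorPoly.contDiffAt,
      iteratedDeriv_taylorPoly_top]
  obtain ⟨δ, hδ, hclose⟩ := Metric.continuousAt_iff.mp
    (hf.continuous_iteratedDeriv m le_rfl).continuousAt ε hε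
  set K := M + |iteratedDeriv m f t|
  have hK0 : 0 ≤ K := add_nonneg ((abs_nonneg _).trans (hM t)) (abs_nonneg _)
  refine ⟨K / δ ^ 2, fun x ↦ ?_⟩
  rcases lt_or_ge |x - t| δ with hnear | hfar
  · have hε : |G x| ≤ ε * |x - t| ^ m :=
      abs_le_mul_abs_sub_pow_of_iteratedDeriv_eq_zero hG hG0 fun y hy ↦ by
        rw [hGm, ← Real.dist_eq]
        exact (hclose ((Real.dist_eq y t).trans_lt (hy.trans_lt hnear))).le
    exact hε.trans (le_add_of_nonneg_right (by positivity))
  · have hK : |G x| ≤ K * |x - t| ^ m :=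
      abs_le_mul_abs_sub_pow_of_iteratedDeriv_eq_zero hG hG0 fun y _ ↦ by
        rw [hGm]
        exact (abs_sub _ _).trans (add_le_add_left (hM y) _)
    calc |G x| ≤ K * |x - t| ^ m := hK
      _ = K / δ ^ 2 * δ ^ 2 * |x - t| ^ m := by field_simp
      _ ≤ K / δ ^ 2 * |x - t| ^ 2 * |x - t| ^ m := by gcongr
      _ = K / δ ^ 2 * |x - t| ^ (m + 2) := by ring
      _ ≤ ε * |x - t| ^ m + K / δ ^ 2 * |x - t| ^ (m + 2) :=
          le_add_of_nonneg_left (by positivity)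

namespace ProbabilityTheory

variable {a r : ℝ}

lemma integrable_taylorPoly_gammaMeasure (ha : 0 < a) (hr : 0 < r) (f : ℝ → ℝ) (t : ℝ) (m : ℕ) :
    Integrable (taylorPoly f t m) (gammaMeasure a r) :=
  integrable_finsetSum _ fun k _ ↦ (integrable_sub_pow_gammaMeasure ha hr t k).const_mul _

lemma integral_taylorPoly_gammaMeasure (ha : 0 < a) (hr : 0 < r) (f : ℝ → ℝ) (t : ℝ) (m : ℕ) :
    ∫ x, taylorPoly f t m x ∂(gammaMeasure a r) = ∑ k ∈ Finset.range (m + 1),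
      iteratedDeriv k f t / k.factorial * ∫ x, (x - t) ^ k ∂(gammaMeasure a r) := by
  unfold taylorPoly
  rw [integral_finsetSum _ fun k _ ↦ (integrable_sub_pow_gammaMeasure ha hr t k).const_mul _]
  simp only [integral_const_mul]

lemma integrable_gammaMeasure_of_abs_le (ha : 0 < a) (hr : 0 < r) {G : ℝ → ℝ}
    (hG : AEStronglyMeasurable G (gammaMeasure a r)) {t A B : ℝ} {j k : ℕ}
    (hbound : ∀ x, |G x| ≤ A * (x - t) ^ j + B * (x - t) ^ k) :
    Integrable G (gammaMeasure a r) :=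
  Integrable.mono' (((integrable_sub_pow_gammaMeasure ha hr t j).const_mul A).add
    ((integrable_sub_pow_gammaMeasure ha hr t k).const_mul B)) hG (.of_forall hbound)

end ProbabilityTheory

section GammaRandomisation

variable {t : ℝ} {n : ℕ}

lemma pow_three_mul_integral_sub_pow_six (ht : 0 < t) (hn : 0 < n) :
    (n : ℝ) ^ 3 * ∫ x, (x - t) ^ 6 ∂(gammaMeasure n (n / t))
      = t ^ 6 * (15 + 130 / n + 120 / n ^ 2) := by
  rw [integral_sub_pow_gammaMeasure (by positivity) (by positivity)]
  simp only [Finset.sum_range_succ, Finset.sum_range_zero, ascPochhammer_succ_eval,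
    ascPochhammer_zero, Polynomial.eval_one, Nat.choose, Nat.reduceSub]
  field_simp
  ring

lemma pow_three_mul_integral_sub_pow_eight (ht : 0 < t) (hn : 0 < n) :
    (n : ℝ) ^ 3 * ∫ x, (x - t) ^ 8 ∂(gammaMeasure n (n / t))
      = t ^ 8 * (105 / n + 2380 / n ^ 2 + 7308 / n ^ 3 + 5040 / n ^ 4) := by
  rw [integral_sub_pow_gammaMeasure (by positivity) (by positivity)]
  simp only [Finset.sum_range_succ, Finset.sum_range_zero, ascPochhammer_succ_eval,
    ascPochhammer_zero, Polynomial.eval_one, Nat.choose, Nat.reduceSub]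
  field_simp
  ring

lemma tendsto_pow_three_mul_integral_taylorPoly_six_sub (ht : 0 < t) (f : ℝ → ℝ) :
    Tendsto (fun n : ℕ ↦ (n : ℝ) ^ 3 *
      ((∫ x, taylorPoly f t 6 x ∂(gammaMeasure n (n / t))) - f t -
        (t ^ 2 / 2 * iteratedDeriv 2 f t) / n -
        (t ^ 4 / 8 * iteratedDeriv 4 f t + t ^ 3 / 3 * iteratedDeriv 3 f t) / n ^ 2))
      atTop (𝓝 (t ^ 6 / 48 * iteratedDeriv 6 f t + t ^ 5 / 6 * iteratedDeriv 5 f t +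
        t ^ 4 / 4 * iteratedDeriv 4 f t)) := by
  have hφ : Continuous fun u : ℝ ↦ t ^ 6 / 48 * iteratedDeriv 6 f t +
      t ^ 5 / 6 * iteratedDeriv 5 f t + t ^ 4 / 4 * iteratedDeriv 4 f t +
      (t ^ 5 / 5 * iteratedDeriv 5 f t + 13 * t ^ 6 / 72 * iteratedDeriv 6 f t) * u +
      t ^ 6 / 6 * iteratedDeriv 6 f t * u ^ 2 := by fun_prop
  refine ((hφ.tendsto' 0 _ (by simp)).comp tendsto_inv_atTop_nhds_zero_nat).congr' ?_
  filter_upwards [eventually_gt_atTop 0] with n hn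
  have ha : (0 : ℝ) < n := by exact_mod_cast hn
  rw [Function.comp_apply, integral_taylorPoly_gammaMeasure ha (div_pos ha ht)]
  simp only [integral_sub_pow_gammaMeasure ha (div_pos ha ht), Finset.sum_range_succ,
    Finset.sum_range_zero, ascPochhammer_succ_eval, ascPochhammer_zero, Polynomial.eval_one,
    Nat.choose, Nat.reduceSub, Nat.factorial, iteratedDeriv_zero]
  field_simp
  ring

lemma tendsto_pow_three_mul_integral_gammaMeasure_of_abs_le (ht : 0 < t) {G : ℝ → ℝ}
    (hbound : ∀ ε > 0, ∃ C, ∀ x, |G x| ≤ ε * (x - t) ^ 6 + C * (x - t) ^ 8) :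
    Tendsto (fun n : ℕ ↦ (n : ℝ) ^ 3 * ∫ x, G x ∂(gammaMeasure n (n / t))) atTop (𝓝 0) := by
  rw [NormedAddGroup.tendsto_nhds_zero]
  intro ε hε
  -- any constant above `15` does, as `n³ ∫ (x - t)⁶ → 15 t⁶`
  set ε' := ε / (16 * t ^ 6)
  obtain ⟨C, hC⟩ := hbound ε' (by positivity)
  have hlim : Tendsto (fun n : ℕ ↦ ε' * (t ^ 6 * (15 + 130 / n + 120 / n ^ 2)) +
      C * (t ^ 8 * (105 / n + 2380 / n ^ 2 + 7308 / n ^ 3 + 5040 / n ^ 4))) atTop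
      (𝓝 (ε' * (t ^ 6 * 15))) := by
    have hφ : Continuous fun u : ℝ ↦ ε' * (t ^ 6 * (15 + 130 * u + 120 * u ^ 2)) +
        C * (t ^ 8 * (105 * u + 2380 * u ^ 2 + 7308 * u ^ 3 + 5040 * u ^ 4)) := by fun_prop
    simpa [div_eq_mul_inv, Function.comp_def] using
      (hφ.tendsto 0).comp tendsto_inv_atTop_nhds_zero_nat
  have hlt : ε' * (t ^ 6 * 15) < ε := by
    rw [show ε' * (t ^ 6 * 15) = 15 / 16 * ε by simp only [ε']; field_simp]
    linarith
  filter_upwards [hlim.eventually_lt_const hlt, eventually_gt_atTop 0] with n hbound_lt hn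
  have ha : (0 : ℝ) < n := by exact_mod_cast hn
  have hr : 0 < (n : ℝ) / t := by positivity
  have h6 := integrable_sub_pow_gammaMeasure ha hr t 6
  have h8 := integrable_sub_pow_gammaMeasure ha hr t 8
  refine lt_of_le_of_lt ?_ hbound_lt
  rw [← pow_three_mul_integral_sub_pow_six ht hn, ← pow_three_mul_integral_sub_pow_eight ht hn,
    norm_mul, Real.norm_of_nonneg (by positivity), mul_left_comm, mul_left_comm C,
    ← mul_add, ← integral_const_mul, ← integral_const_mul, ← integral_add
      (h6.const_mul ε') (h8.const_mul C)]
  gcongr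
  refine norm_integral_le_of_norm_le ((h6.const_mul ε').add (h8.const_mul C))
    (.of_forall fun x ↦ ?_)
  simpa using hC x

end GammaRandomisation

/-- Third-order randomisation error: for `t > 0` and `f` of class `C⁶` with bounded sixth
derivative, with `b₁(t) = (t²/2) f''(t)` and `b₂(t) = (t⁴/8) f⁽⁴⁾(t) + (t³/3) f⁽³⁾(t)`,
`n³ (∫ f dΓ(n,n/t) - f(t) - b₁(t)/n - b₂(t)/n²) →
  (t⁶/48) f⁽⁶⁾(t) + (t⁵/6) f⁽⁵⁾(t) + (t⁴/4) f⁽⁴⁾(t)`. -/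
theorem gamma_randomisation_third_order (t : ℝ) (ht : 0 < t) (f : ℝ → ℝ)
    (hf : ContDiff ℝ 6 f)
    (hf_bdd : ∃ M : ℝ, ∀ x : ℝ, |iteratedDeriv 6 f x| ≤ M) :
    Tendsto (fun n : ℕ =>
        (n : ℝ) ^ 3 *
          ((∫ x, f x ∂(gammaMeasure n ((n : ℝ) / t))) - f t -
            (t ^ 2 / 2 * iteratedDeriv 2 f t) / n -
            (t ^ 4 / 8 * iteratedDeriv 4 f t + t ^ 3 / 3 * iteratedDeriv 3 f t) / n ^ 2))
      atTop
      (nhds (t ^ 6 / 48 * iteratedDeriv 6 f t + t ^ 5 / 6 * iteratedDeriv 5 f t +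
        t ^ 4 / 4 * iteratedDeriv 4 f t)) := by
  obtain ⟨M, hM⟩ := hf_bdd
  set G := fun x ↦ f x - taylorPoly f t 6 x
  have hG (ε : ℝ) (hε : 0 < ε) : ∃ C, ∀ x, |G x| ≤ ε * (x - t) ^ 6 + C * (x - t) ^ 8 := by
    simpa [(by decide : Even 6).pow_abs, (by decide : Even 8).pow_abs] using
      abs_sub_taylorPoly_le hf hM t hε
  obtain ⟨C, hC⟩ := hG 1 one_pos
  have hlim := (tendsto_pow_three_mul_integral_taylorPoly_six_sub ht f).add
    (tendsto_pow_three_mul_integral_gammaMeasure_of_abs_le ht hG)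
  rw [add_zero] at hlim
  refine hlim.congr' ?_
  filter_upwards [eventually_gt_atTop 0] with n hn
  have ha : (0 : ℝ) < n := by exact_mod_cast hn
  have hr : 0 < (n : ℝ) / t := by positivity
  set μ := gammaMeasure n (n / t)
  have hsplit : ∫ x, f x ∂μ = (∫ x, taylorPoly f t 6 x ∂μ) + ∫ x, G x ∂μ := by
    have hGc : Continuous G := hf.continuous.sub (contDiff_taylorPoly (n := 0)).continuous
    rw [← integral_add (μ := μ) (integrable_taylorPoly_gammaMeasure ha hr f t 6)
      (integrable_gammaMeasure_of_abs_le ha hr hGc.aestronglyMeasurable hC)]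
    simp only [G, add_sub_cancel]
  rw [hsplit]
  ring
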